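/- Let L1, L2 : ℝ^d × ℝ^p → ℝ be twice continuously differentiable, let α > 0, ℓ10, ℓ11, ℓ21, ℓ22 ≥ 0, μ2 > 0, and fix λ ∈ ℝ^p. Assume: (a) ‖∇L1‖ ≤ ℓ10 everywhere and ∇L1 is ℓ11-Lipschitz; (b) u ↦ L2(u, λ) is μ2-strongly convex and ∇L2 is ℓ21-Lipschitz; (c) the Hessian of L2 is ℓ22-Lipschitz, in the sense that for all u, ω: ‖∇_λ L2(ω, λ) − ∇_λ L2(u, λ) − ∇²_{λu}L2(u, λ)(ω − u)‖ ≤ (ℓ22/2)‖ω − u‖² and ‖∇_u L2(ω, λ) − ∇_u L2(u, λ) − ∇²_{uu}L2(u, λ)(ω − u)‖ ≤ (ℓ22/2)‖ω − u‖²; (d) u* = u*(λ) minimizes L2(·, λ), the Hessian H = ∇²_{uu}L2(u*, λ) is an invertible linear map with ‖H⁻¹‖ ≤ 1/μ2, and the cross Hessian J = ∇²_{λu}L2(u*, λ) satisfies ‖J‖ ≤ ℓ21; (e) ω*_α = ω*_α(λ) satisfies ∇_ω L1(ω*_α, λ) + α∇_ω L2(ω*_α, λ) = 0 and ‖ω*_α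 − u*‖ ≤ ℓ10/(μ2·α). Define the hypergradient h = ∇_λ L1(u*, λ) − J H⁻¹ ∇_u L1(u*, λ) and the penalized gradient g = ∇_λ L1(ω*_α, λ) + α(∇_λ L2(ω*_α, λ) − ∇_λ L2(u*, λ)). Then ‖h − g‖ ≤ (ℓ11 + ℓ10ℓ22/(2μ2))·(1 + ℓ21/μ2)·ℓ10/(μ2·α). -/

import Mathlib

open scoped RealInnerProductSpace

/-!
Write `r = ‖ω*_α − u*‖`. Subtracting `H (ω*_α − u*)` inside `H⁻¹` from the stationarity condition
`∇_u L1(ω*_α) + α ∇_u L2(ω*_α) = 0` and using `∇_u L2(u*) = 0`, the gap `h − g` splits into the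
Lipschitz differences of `∇L1` between `u*` and `ω*_α` (each of size `ℓ11 r`) and `α` times the
second-order Taylor remainders of `∇L2` at `u*` (each of size `ℓ22 r² / 2`), one of them passed
through `J H⁻¹`. This gives `‖h − g‖ ≤ (1 + ℓ21/μ2)(ℓ11 r + α ℓ22 r²/2)`, and `α r ≤ ℓ10/μ2`
turns it into the claimed `O(1/α)` bound.
-/

theorem IsLocalMin.gradient_eq_zero {F : Type*} [NormedAddCommGroup F] [InnerProductSpace ℝ F]
    [CompleteSpace F] {f : F → ℝ} {x : F} (h : IsLocalMin f x) : gradient f x = 0 := by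
  simp [gradient, h.fderiv_eq_zero]

theorem gradient_add_const_mul {F : Type*} [NormedAddCommGroup F] [InnerProductSpace ℝ F]
    [CompleteSpace F] {f g : F → ℝ} {x : F} (hf : DifferentiableAt ℝ f x)
    (hg : DifferentiableAt ℝ g x) (c : ℝ) :
    gradient (fun y => f y + c * g y) x = gradient f x + c • gradient g x := by
  simp only [gradient, fderiv_fun_add hf (hg.const_mul c), fderiv_const_mul hg, map_add, map_smul]

theorem Differentiable.comp_prodMk_right {E F G : Type*} [NormedAddCommGroup E] [NormedSpace ℝ E]
    [NormedAddCommGroup F] [NormedSpace ℝ F] [NormedAddCommGroup G] [NormedSpace ℝ G]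
    {f : E → F → G} (hf : Differentiable ℝ fun q : E × F => f q.1 q.2) (y : F) :
    Differentiable ℝ fun x => f x y :=
  hf.comp (differentiable_id.prodMk (differentiable_const y))

section PenalizedGap

variable {E F : Type*} [NormedAddCommGroup E] [NormedSpace ℝ E]
  [NormedAddCommGroup F] [NormedSpace ℝ F]
  {gu₁ gu₂ : E → E} {gl₁ gl₂ : E → F} {J : E →L[ℝ] F} {H Hinv : E →L[ℝ] E} {α : ℝ} {u ω : E}

theorem hypergradient_sub_penalized_eq (hinv : Function.LeftInverse Hinv H)
    (hstat : gu₁ ω + α • gu₂ ω = 0) :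
    (gl₁ u - J (Hinv (gu₁ u))) - (gl₁ ω + α • (gl₂ ω - gl₂ u)) =
      (gl₁ u - gl₁ ω) + J (Hinv ((gu₁ ω - gu₁ u) + α • (gu₂ ω - H (ω - u))))
        - α • (gl₂ ω - gl₂ u - J (ω - u)) := by
  have hHinv :
      Hinv ((gu₁ ω - gu₁ u) + α • (gu₂ ω - H (ω - u))) = -(α • (ω - u)) - Hinv (gu₁ u) := by
    have hsplit : (gu₁ ω - gu₁ u) + α • (gu₂ ω - H (ω - u)) =
        -(α • H (ω - u)) - gu₁ u + (gu₁ ω + α • gu₂ ω) := by module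
    rw [hsplit, hstat, add_zero, map_sub, map_neg, map_smul, hinv]
  rw [hHinv, map_sub, map_neg, map_smul]
  module

theorem norm_apply_apply_le_div_mul {ℓ μ : ℝ} (hJ : ‖J‖ ≤ ℓ) (hHinv : ‖Hinv‖ ≤ 1 / μ) (x : E) :
    ‖J (Hinv x)‖ ≤ ℓ / μ * ‖x‖ :=
  calc ‖J (Hinv x)‖ ≤ ℓ * (1 / μ * ‖x‖) := J.le_of_opNorm_le_of_le hJ (Hinv.le_of_opNorm_le hHinv x)
    _ = ℓ / μ * ‖x‖ := by ring

theorem norm_hypergradient_sub_penalized_le {ℓ₁₁ ℓ₂₁ ℓ₂₂ μ₂ : ℝ} (hα : 0 ≤ α) (hℓ₂₁ : 0 ≤ ℓ₂₁)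
    (hμ₂ : 0 ≤ μ₂)
    (hgl₁ : ‖gl₁ u - gl₁ ω‖ ≤ ℓ₁₁ * ‖ω - u‖) (hgu₁ : ‖gu₁ ω - gu₁ u‖ ≤ ℓ₁₁ * ‖ω - u‖)
    (hJ : ‖gl₂ ω - gl₂ u - J (ω - u)‖ ≤ ℓ₂₂ / 2 * ‖ω - u‖ ^ 2)
    (hH : ‖gu₂ ω - gu₂ u - H (ω - u)‖ ≤ ℓ₂₂ / 2 * ‖ω - u‖ ^ 2)
    (hcrit : gu₂ u = 0) (hstat : gu₁ ω + α • gu₂ ω = 0)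
    (hinv : Function.LeftInverse Hinv H) (hHinv : ‖Hinv‖ ≤ 1 / μ₂) (hJnorm : ‖J‖ ≤ ℓ₂₁) :
    ‖(gl₁ u - J (Hinv (gu₁ u))) - (gl₁ ω + α • (gl₂ ω - gl₂ u))‖ ≤
      (1 + ℓ₂₁ / μ₂) * (ℓ₁₁ * ‖ω - u‖ + α * (ℓ₂₂ / 2 * ‖ω - u‖ ^ 2)) := by
  rw [hcrit, sub_zero] at hH
  have hinner : ‖(gu₁ ω - gu₁ u) + α • (gu₂ ω - H (ω - u))‖ ≤
      ℓ₁₁ * ‖ω - u‖ + α * (ℓ₂₂ / 2 * ‖ω - u‖ ^ 2) := by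
    grw [norm_add_le, norm_smul, Real.norm_of_nonneg hα, hgu₁, hH]
  rw [hypergradient_sub_penalized_eq hinv hstat]
  grw [norm_sub_le, norm_add_le, norm_apply_apply_le_div_mul hJnorm hHinv, hinner, norm_smul,
    Real.norm_of_nonneg hα, hgl₁, hJ]
  linarith

end PenalizedGap

theorem add_mul_mul_sq_le_of_le_div {ℓ₁₀ ℓ₁₁ ℓ₂₂ μ α r : ℝ} (hα : 0 < α) (hμ : 0 < μ)
    (hℓ₁₀ : 0 ≤ ℓ₁₀) (hℓ₁₁ : 0 ≤ ℓ₁₁) (hℓ₂₂ : 0 ≤ ℓ₂₂) (hr : 0 ≤ r) (hrα : r ≤ ℓ₁₀ / (μ * α)) :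
    ℓ₁₁ * r + α * (ℓ₂₂ / 2 * r ^ 2) ≤ (ℓ₁₁ + ℓ₁₀ * ℓ₂₂ / (2 * μ)) * (ℓ₁₀ / (μ * α)) := by
  have hαr : α * r ≤ ℓ₁₀ / μ :=
    calc α * r ≤ α * (ℓ₁₀ / (μ * α)) := by gcongr
      _ = ℓ₁₀ / μ := by field_simp
  calc ℓ₁₁ * r + α * (ℓ₂₂ / 2 * r ^ 2) = ℓ₁₁ * r + ℓ₂₂ / 2 * (α * r) * r := by ring
    _ ≤ ℓ₁₁ * r + ℓ₂₂ / 2 * (ℓ₁₀ / μ) * r := by gcongr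
    _ = (ℓ₁₁ + ℓ₁₀ * ℓ₂₂ / (2 * μ)) * r := by ring
    _ ≤ (ℓ₁₁ + ℓ₁₀ * ℓ₂₂ / (2 * μ)) * (ℓ₁₀ / (μ * α)) := by gcongr

theorem hypergradient_penalized_gradient_gap_general
    (d p : ℕ)
    (L1 L2 : EuclideanSpace ℝ (Fin d) → EuclideanSpace ℝ (Fin p) → ℝ)
    (α ℓ10 ℓ11 ℓ21 ℓ22 μ2 : ℝ)
    (hα : 0 < α) (hℓ10 : 0 ≤ ℓ10) (hℓ11 : 0 ≤ ℓ11) (hℓ21 : 0 ≤ ℓ21)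
    (hℓ22 : 0 ≤ ℓ22) (hμ2 : 0 < μ2)
    (hL1smooth : ContDiff ℝ 2 fun q : EuclideanSpace ℝ (Fin d) × EuclideanSpace ℝ (Fin p) =>
      L1 q.1 q.2)
    (hL2smooth : ContDiff ℝ 2 fun q : EuclideanSpace ℝ (Fin d) × EuclideanSpace ℝ (Fin p) =>
      L2 q.1 q.2)
    (lam : EuclideanSpace ℝ (Fin p))
    -- (a): ‖∇L1‖ ≤ ℓ10 and ∇L1 is ℓ11-Lipschitz (partial gradients, at the fixed λ)
    (hgu1lip : ∀ u u',
      ‖gradient (fun v => L1 v lam) u - gradient (fun v => L1 v lam) u'‖ ≤ ℓ11 * ‖u - u'‖)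
    (hgl1lip : ∀ u u',
      ‖gradient (fun l => L1 u l) lam - gradient (fun l => L1 u' l) lam‖ ≤ ℓ11 * ‖u - u'‖)
    -- (c): the Hessian of L2 is ℓ22-Lipschitz, expressed as Taylor remainder bounds
    (Hf : EuclideanSpace ℝ (Fin d) →
      (EuclideanSpace ℝ (Fin d) →L[ℝ] EuclideanSpace ℝ (Fin d)))
    (Jf : EuclideanSpace ℝ (Fin d) →
      (EuclideanSpace ℝ (Fin d) →L[ℝ] EuclideanSpace ℝ (Fin p)))
    (hJtaylor : ∀ u ω,
      ‖gradient (fun l => L2 ω l) lam - gradient (fun l => L2 u l) lam - Jf u (ω - u)‖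
        ≤ ℓ22 / 2 * ‖ω - u‖ ^ 2)
    (hHtaylor : ∀ u ω,
      ‖gradient (fun v => L2 v lam) ω - gradient (fun v => L2 v lam) u - Hf u (ω - u)‖
        ≤ ℓ22 / 2 * ‖ω - u‖ ^ 2)
    -- (d): u* minimizes L2(·, λ); H = ∇²_{uu}L2(u*, λ) invertible, ‖H⁻¹‖ ≤ 1/μ2, ‖J‖ ≤ ℓ21
    (uStar : EuclideanSpace ℝ (Fin d))
    (huStar : ∀ u, L2 uStar lam ≤ L2 u lam)
    (Hinv : EuclideanSpace ℝ (Fin d) →L[ℝ] EuclideanSpace ℝ (Fin d))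
    (hHinv2 : Hinv.comp (Hf uStar) = ContinuousLinearMap.id ℝ (EuclideanSpace ℝ (Fin d)))
    (hHinvNorm : ‖Hinv‖ ≤ 1 / μ2)
    (hJnorm : ‖Jf uStar‖ ≤ ℓ21)
    -- (e): ω*_α is a stationary point of L1(·, λ) + αL2(·, λ), close to u*
    (ωα : EuclideanSpace ℝ (Fin d))
    (hωαStat : gradient (fun ω => L1 ω lam + α * L2 ω lam) ωα = 0)
    (hωαClose : ‖ωα - uStar‖ ≤ ℓ10 / (μ2 * α)) :
    ‖(gradient (fun l => L1 uStar l) lam -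
          Jf uStar (Hinv (gradient (fun v => L1 v lam) uStar))) -
        (gradient (fun l => L1 ωα l) lam +
          α • (gradient (fun l => L2 ωα l) lam - gradient (fun l => L2 uStar l) lam))‖
      ≤ (ℓ11 + ℓ10 * ℓ22 / (2 * μ2)) * (1 + ℓ21 / μ2) * (ℓ10 / (μ2 * α)) := by
  have hdiff₁ := (hL1smooth.differentiable two_ne_zero).comp_prodMk_right lam
  have hdiff₂ := (hL2smooth.differentiable two_ne_zero).comp_prodMk_right lam
  have hcrit : gradient (fun v => L2 v lam) uStar = 0 :=
    IsLocalMin.gradient_eq_zero (Filter.Eventually.of_forall huStar)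
  have hstat : gradient (fun v => L1 v lam) ωα + α • gradient (fun v => L2 v lam) ωα = 0 := by
    rwa [gradient_add_const_mul (hdiff₁ ωα) (hdiff₂ ωα)] at hωαStat
  have hinv : Function.LeftInverse Hinv (Hf uStar) := fun x => by
    simpa using DFunLike.congr_fun hHinv2 x
  calc _ ≤ (1 + ℓ21 / μ2) * (ℓ11 * ‖ωα - uStar‖ + α * (ℓ22 / 2 * ‖ωα - uStar‖ ^ 2)) :=
        norm_hypergradient_sub_penalized_le (gu₁ := gradient (fun v => L1 v lam))
          (gl₁ := fun u => gradient (fun l => L1 u l) lam)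
          (gl₂ := fun u => gradient (fun l => L2 u l) lam) hα.le hℓ21 hμ2.le
          (norm_sub_rev ωα uStar ▸ hgl1lip uStar ωα) (hgu1lip ωα uStar) (hJtaylor uStar ωα)
          (hHtaylor uStar ωα) hcrit hstat hinv hHinvNorm hJnorm
    _ ≤ (1 + ℓ21 / μ2) * ((ℓ11 + ℓ10 * ℓ22 / (2 * μ2)) * (ℓ10 / (μ2 * α))) := by
        gcongr
        exact add_mul_mul_sq_le_of_le_div hα hμ2 hℓ10 hℓ11 hℓ22 (norm_nonneg _) hωαClose
    _ = (ℓ11 + ℓ10 * ℓ22 / (2 * μ2)) * (1 + ℓ21 / μ2) * (ℓ10 / (μ2 * α)) := by ring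

/-- the hypergradient of the bilevel value function is within
O(κ³/α) of the gradient of the penalized value function. -/
theorem hypergradient_penalized_gradient_gap
    (d p : ℕ) (hd : 0 < d) (hp : 0 < p)
    (L1 L2 : EuclideanSpace ℝ (Fin d) → EuclideanSpace ℝ (Fin p) → ℝ)
    (α ℓ10 ℓ11 ℓ21 ℓ22 μ2 : ℝ)
    (hα : 0 < α) (hℓ10 : 0 ≤ ℓ10) (hℓ11 : 0 ≤ ℓ11) (hℓ21 : 0 ≤ ℓ21)
    (hℓ22 : 0 ≤ ℓ22) (hμ2 : 0 < μ2)
    (hL1smooth : ContDiff ℝ 2 fun q : EuclideanSpace ℝ (Fin d) × EuclideanSpace ℝ (Fin p) =>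
      L1 q.1 q.2)
    (hL2smooth : ContDiff ℝ 2 fun q : EuclideanSpace ℝ (Fin d) × EuclideanSpace ℝ (Fin p) =>
      L2 q.1 q.2)
    (lam : EuclideanSpace ℝ (Fin p))
    -- (a): ‖∇L1‖ ≤ ℓ10 and ∇L1 is ℓ11-Lipschitz (partial gradients, at the fixed λ)
    (hgu1bdd : ∀ u, ‖gradient (fun v => L1 v lam) u‖ ≤ ℓ10)
    (hgl1bdd : ∀ u, ‖gradient (fun l => L1 u l) lam‖ ≤ ℓ10)
    (hgu1lip : ∀ u u',
      ‖gradient (fun v => L1 v lam) u - gradient (fun v => L1 v lam) u'‖ ≤ ℓ11 * ‖u - u'‖)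
    (hgl1lip : ∀ u u',
      ‖gradient (fun l => L1 u l) lam - gradient (fun l => L1 u' l) lam‖ ≤ ℓ11 * ‖u - u'‖)
    -- (b): u ↦ L2(u, λ) is μ2-strongly convex and ∇L2 is ℓ21-Lipschitz
    (hsc : ∀ x y, L2 x lam ≥ L2 y lam +
      ⟪gradient (fun v => L2 v lam) y, x - y⟫ + μ2 / 2 * ‖x - y‖ ^ 2)
    (hgu2lip : ∀ u u',
      ‖gradient (fun v => L2 v lam) u - gradient (fun v => L2 v lam) u'‖ ≤ ℓ21 * ‖u - u'‖)
    (hgl2lip : ∀ u u',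
      ‖gradient (fun l => L2 u l) lam - gradient (fun l => L2 u' l) lam‖ ≤ ℓ21 * ‖u - u'‖)
    -- (c): the Hessian of L2 is ℓ22-Lipschitz, expressed as Taylor remainder bounds
    (Hf : EuclideanSpace ℝ (Fin d) →
      (EuclideanSpace ℝ (Fin d) →L[ℝ] EuclideanSpace ℝ (Fin d)))
    (Jf : EuclideanSpace ℝ (Fin d) →
      (EuclideanSpace ℝ (Fin d) →L[ℝ] EuclideanSpace ℝ (Fin p)))
    (hJtaylor : ∀ u ω,
      ‖gradient (fun l => L2 ω l) lam - gradient (fun l => L2 u l) lam - Jf u (ω - u)‖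
        ≤ ℓ22 / 2 * ‖ω - u‖ ^ 2)
    (hHtaylor : ∀ u ω,
      ‖gradient (fun v => L2 v lam) ω - gradient (fun v => L2 v lam) u - Hf u (ω - u)‖
        ≤ ℓ22 / 2 * ‖ω - u‖ ^ 2)
    -- (d): u* minimizes L2(·, λ); H = ∇²_{uu}L2(u*, λ) invertible, ‖H⁻¹‖ ≤ 1/μ2, ‖J‖ ≤ ℓ21
    (uStar : EuclideanSpace ℝ (Fin d))
    (huStar : ∀ u, L2 uStar lam ≤ L2 u lam)
    (Hinv : EuclideanSpace ℝ (Fin d) →L[ℝ] EuclideanSpace ℝ (Fin d))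
    (hHinv1 : (Hf uStar).comp Hinv = ContinuousLinearMap.id ℝ (EuclideanSpace ℝ (Fin d)))
    (hHinv2 : Hinv.comp (Hf uStar) = ContinuousLinearMap.id ℝ (EuclideanSpace ℝ (Fin d)))
    (hHinvNorm : ‖Hinv‖ ≤ 1 / μ2)
    (hJnorm : ‖Jf uStar‖ ≤ ℓ21)
    -- (e): ω*_α is a stationary point of L1(·, λ) + αL2(·, λ), close to u*
    (ωα : EuclideanSpace ℝ (Fin d))
    (hωαStat : gradient (fun ω => L1 ω lam + α * L2 ω lam) ωα = 0)
    (hωαClose : ‖ωα - uStar‖ ≤ ℓ10 / (μ2 * α)) :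
    ‖(gradient (fun l => L1 uStar l) lam -
          Jf uStar (Hinv (gradient (fun v => L1 v lam) uStar))) -
        (gradient (fun l => L1 ωα l) lam +
          α • (gradient (fun l => L2 ωα l) lam - gradient (fun l => L2 uStar l) lam))‖
      ≤ (ℓ11 + ℓ10 * ℓ22 / (2 * μ2)) * (1 + ℓ21 / μ2) * (ℓ10 / (μ2 * α)) :=
  hypergradient_penalized_gradient_gap_general d p L1 L2 α ℓ10 ℓ11 ℓ21 ℓ22 μ2 hα hℓ10 hℓ11 hℓ21 hℓ22
    hμ2 hL1smooth hL2smooth lam hgu1lip hgl1lip Hf Jf hJtaylor hHtaylor uStar huStar Hinv hHinv2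
    hHinvNorm hJnorm ωα hωαStat hωαClose
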